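/- arXiv:2107.04310 — 3 statements merged into one kernel-verified Lean document; each statement's English description precedes it below -/
import Mathlib

section
/- Fix N ≥ 2. Let E₀ > 0 and let τ₁₁,…,τ_{NN} be positive reals with τ_{ii} ≤ E₀/N for each i. Set E₁ = τ₁₁+…+τ_{NN}, R = 1 − E₁/E₀, and assume R < 1/N. Let ε₀ satisfy (1+ε₀)^{2N/(N−1)} = (τ₂₂+…+τ_{NN})/((N−1)τ₁₁) with 1+ε₀ > 0. Then (1 − (N/(N−1))R)^{(N−1)/(2N)} − 1 ≤ ε₀ ≤ (1−NR)^{−(N−1)/(2N)} − 1. -/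
/-!
Write `t = τ 0` and `S = ∑_{i ≠ 0} τ i`, so `E₁ = t + S` and `(1 + ε₀) ^ p = S / ((N - 1) t)`
with `p = 2N / (N - 1)`. Clearing denominators, the two bounds on this ratio become
`0 ≤ E₁ (E₀ - N t)` and `0 ≤ E₁ ((N - 1) E₀ - N S)`, and both factors in brackets are
nonnegative because every `τ i` is at most `E₀ / N`. Taking `p`-th roots, which is monotone,
gives the bounds on `ε₀`.
-/

open Finset

theorem Fin.sum_erase_le_mul {n : ℕ} {f : Fin (n + 1) → ℝ} {c : ℝ} (hf : ∀ i, f i ≤ c)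
    (j : Fin (n + 1)) : ∑ i ∈ univ.erase j, f i ≤ n * c := by
  calc ∑ i ∈ univ.erase j, f i ≤ #(univ.erase j) • c := sum_le_card_nsmul _ _ _ fun i _ ↦ hf i
    _ = n * c := by simp [card_erase_of_mem (mem_univ j)]

section

variable {n t S E R : ℝ}

theorem one_sub_div_mul_pos (hn : 0 ≤ n) (hR : (n + 2) * R < 1) :
    0 < 1 - (n + 2) / (n + 1) * R := by
  rw [div_mul_eq_mul_div, sub_pos, div_lt_one (by positivity)]
  linarith

theorem lower_le_split_ratio (hn : 0 ≤ n) (ht : 0 < t) (hE : 0 < E) (hS : 0 ≤ t + S)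
    (htE : (n + 2) * t ≤ E) (hR : R = 1 - (t + S) / E) :
    1 - (n + 2) / (n + 1) * R ≤ S / ((n + 1) * t) := by
  have key : 0 ≤ (t + S) * (E - (n + 2) * t) / E := by
    have := mul_nonneg hS (sub_nonneg.2 htE)
    positivity
  have expand : S - (1 - (n + 2) / (n + 1) * (1 - (t + S) / E)) * ((n + 1) * t) =
      (t + S) * (E - (n + 2) * t) / E := by
    field_simp
    ring
  rw [le_div_iff₀ (by positivity), hR]
  linarith

theorem split_ratio_le_inv (hn : 0 ≤ n) (ht : 0 < t) (hE : 0 < E) (hS : 0 ≤ t + S)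
    (hSE : (n + 2) * S ≤ (n + 1) * E) (hR : R = 1 - (t + S) / E)
    (hRpos : 0 < 1 - (n + 2) * R) :
    S / ((n + 1) * t) ≤ (1 - (n + 2) * R)⁻¹ := by
  have key : 0 ≤ (t + S) * ((n + 1) * E - (n + 2) * S) / E := by
    have := mul_nonneg hS (sub_nonneg.2 hSE)
    positivity
  have expand : (n + 1) * t - S * (1 - (n + 2) * (1 - (t + S) / E)) =
      (t + S) * ((n + 1) * E - (n + 2) * S) / E := by
    field_simp
    ring
  rw [← one_div, le_div_iff₀ hRpos, div_mul_eq_mul_div, div_le_one (by positivity), hR]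
  linarith

end

theorem stmt_8 (n : ℕ) (E₀ : ℝ) (hE₀ : 0 < E₀) (τ : Fin (n + 2) → ℝ)
    (hτpos : ∀ i, 0 < τ i) (hτle : ∀ i, τ i ≤ E₀ / ((n : ℝ) + 2))
    (E₁ R ε₀ : ℝ)
    (hE₁ : E₁ = ∑ i, τ i)
    (hR : R = 1 - E₁ / E₀)
    (hRlt : R < 1 / ((n : ℝ) + 2))
    (hε : 0 < 1 + ε₀)
    (hεeq : (1 + ε₀) ^ ((2 * ((n : ℝ) + 2)) / ((n : ℝ) + 1)) =
        (∑ i ∈ Finset.univ.erase 0, τ i) / (((n : ℝ) + 1) * τ 0)) :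
    (1 - (((n : ℝ) + 2) / ((n : ℝ) + 1)) * R) ^ (((n : ℝ) + 1) / (2 * ((n : ℝ) + 2))) - 1
      ≤ ε₀ ∧
    ε₀ ≤ (1 - ((n : ℝ) + 2) * R) ^ (-(((n : ℝ) + 1) / (2 * ((n : ℝ) + 2)))) - 1 := by
  have hn : (0 : ℝ) ≤ n := n.cast_nonneg
  have hN : (0 : ℝ) < n + 2 := by positivity
  have hNR : ((n : ℝ) + 2) * R < 1 := (lt_div_iff₀' hN).1 hRlt
  set S := ∑ i ∈ univ.erase 0, τ i
  have hE₁S : E₁ = τ 0 + S := by rw [hE₁, add_sum_erase _ _ (mem_univ 0)]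
  have hRS : R = 1 - (τ 0 + S) / E₀ := hE₁S ▸ hR
  have hE₁nonneg : 0 ≤ τ 0 + S := hE₁S ▸ hE₁ ▸ sum_nonneg fun i _ ↦ (hτpos i).le
  have htE : ((n : ℝ) + 2) * τ 0 ≤ E₀ := (le_div_iff₀' hN).1 (hτle 0)
  have hSE : ((n : ℝ) + 2) * S ≤ (n + 1) * E₀ := by
    have := Fin.sum_erase_le_mul (n := n + 1) hτle 0
    push_cast at this
    rwa [mul_div_assoc', le_div_iff₀' hN] at this
  have hp : (0 : ℝ) < 2 * (n + 2) / (n + 1) := by positivity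
  rw [← inv_div (2 * ((n : ℝ) + 2)), Real.rpow_neg_eq_inv_rpow, sub_le_iff_le_add',
    le_sub_iff_add_le']
  constructor
  · refine (Real.rpow_inv_le_iff_of_pos (one_sub_div_mul_pos hn hNR).le hε.le hp).2 ?_
    exact hεeq ▸ lower_le_split_ratio hn (hτpos 0) hE₀ hE₁nonneg htE hRS
  · refine (Real.le_rpow_inv_iff_of_pos hε.le (inv_nonneg.2 (by linarith)) hp).2 ?_
    exact hεeq ▸ split_ratio_le_inv hn (hτpos 0) hE₀ hE₁nonneg hSE hRS (by linarith)
end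

section
/- Let W₀, W₁, E₀, E₁ > 0, let z₀, z₁ ∈ ℝᴺ with ‖z₀‖² = W₀E₀R₀ and ‖z₁‖² = W₁E₁R₀ for some R₀ > 0. For s ∈ [0,1] define W_s = (1−s)W₀+sW₁, E_s = (1−s)E₀+sE₁, z_s = (1−s)z₀+sz₁, and R_s = ‖z_s‖²/(W_s E_s). Then R_s ≤ R₀ for all s ∈ [0,1]. -/
/-! By the triangle inequality `‖z_s‖ ≤ (1 - s)‖z₀‖ + s‖z₁‖`. Squaring, the diagonal terms are
`(1 - s)² W₀E₀R₀` and `s² W₁E₁R₀`, while AM-GM bounds the cross term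
`2‖z₀‖‖z₁‖ = 2R₀√(W₀E₁ · W₁E₀) ≤ R₀(W₀E₁ + W₁E₀)`. The three bounds sum to exactly `R₀ W_s E_s`. -/

lemma norm_lineMap_le {V : Type*} [SeminormedAddCommGroup V] [NormedSpace ℝ V]
    {s : ℝ} (hs₀ : 0 ≤ s) (hs₁ : s ≤ 1) (x y : V) :
    ‖(1 - s) • x + s • y‖ ≤ (1 - s) * ‖x‖ + s * ‖y‖ :=
  calc ‖(1 - s) • x + s • y‖ ≤ ‖(1 - s) • x‖ + ‖s • y‖ := norm_add_le _ _
    _ = (1 - s) * ‖x‖ + s * ‖y‖ := by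
      rw [norm_smul, norm_smul, Real.norm_of_nonneg (sub_nonneg.2 hs₁), Real.norm_of_nonneg hs₀]

lemma two_mul_le_of_sq_eq_mul {a b W₀ W₁ E₀ E₁ R : ℝ} (ha : 0 ≤ a) (hb : 0 ≤ b)
    (hW₀ : 0 ≤ W₀) (hW₁ : 0 ≤ W₁) (hE₀ : 0 ≤ E₀) (hE₁ : 0 ≤ E₁) (hR : 0 ≤ R)
    (ha2 : a ^ 2 = W₀ * E₀ * R) (hb2 : b ^ 2 = W₁ * E₁ * R) :
    2 * (a * b) ≤ R * (W₀ * E₁ + W₁ * E₀) := by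
  refine (pow_le_pow_iff_left₀ (by positivity) (by positivity) two_ne_zero).1 ?_
  calc (2 * (a * b)) ^ 2 = R ^ 2 * (4 * (W₀ * E₁) * (W₁ * E₀)) := by
        rw [mul_pow, mul_pow, ha2, hb2]; ring
    _ ≤ R ^ 2 * (W₀ * E₁ + W₁ * E₀) ^ 2 := by gcongr; exact four_mul_le_pow_two_add _ _
    _ = (R * (W₀ * E₁ + W₁ * E₀)) ^ 2 := by ring

lemma norm_sq_lineMap_le_mul {V : Type*} [SeminormedAddCommGroup V] [NormedSpace ℝ V]
    {W₀ W₁ E₀ E₁ R : ℝ} (hW₀ : 0 ≤ W₀) (hW₁ : 0 ≤ W₁) (hE₀ : 0 ≤ E₀) (hE₁ : 0 ≤ E₁)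
    (hR : 0 ≤ R) {z₀ z₁ : V} (hz₀ : ‖z₀‖ ^ 2 = W₀ * E₀ * R) (hz₁ : ‖z₁‖ ^ 2 = W₁ * E₁ * R)
    {s : ℝ} (hs₀ : 0 ≤ s) (hs₁ : s ≤ 1) :
    ‖(1 - s) • z₀ + s • z₁‖ ^ 2 ≤ R * (((1 - s) * W₀ + s * W₁) * ((1 - s) * E₀ + s * E₁)) := by
  have hcross := two_mul_le_of_sq_eq_mul (norm_nonneg z₀) (norm_nonneg z₁)
    hW₀ hW₁ hE₀ hE₁ hR hz₀ hz₁
  calc ‖(1 - s) • z₀ + s • z₁‖ ^ 2 ≤ ((1 - s) * ‖z₀‖ + s * ‖z₁‖) ^ 2 := by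
        gcongr; exact norm_lineMap_le hs₀ hs₁ z₀ z₁
    _ = (1 - s) ^ 2 * ‖z₀‖ ^ 2 + (1 - s) * s * (2 * (‖z₀‖ * ‖z₁‖)) + s ^ 2 * ‖z₁‖ ^ 2 := by ring
    _ ≤ (1 - s) ^ 2 * (W₀ * E₀ * R) + (1 - s) * s * (R * (W₀ * E₁ + W₁ * E₀))
          + s ^ 2 * (W₁ * E₁ * R) := by
        rw [hz₀, hz₁]; gcongr
    _ = R * (((1 - s) * W₀ + s * W₁) * ((1 - s) * E₀ + s * E₁)) := by ring

theorem stmt_9 (N : ℕ) (W₀ W₁ E₀ E₁ R₀ : ℝ)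
    (hW₀ : 0 < W₀) (hW₁ : 0 < W₁) (hE₀ : 0 < E₀) (hE₁ : 0 < E₁) (hR₀ : 0 < R₀)
    (z₀ z₁ : EuclideanSpace ℝ (Fin N))
    (hz₀ : ‖z₀‖ ^ 2 = W₀ * E₀ * R₀) (hz₁ : ‖z₁‖ ^ 2 = W₁ * E₁ * R₀) :
    ∀ s ∈ Set.Icc (0 : ℝ) 1,
      ‖(1 - s) • z₀ + s • z₁‖ ^ 2 / (((1 - s) * W₀ + s * W₁) * ((1 - s) * E₀ + s * E₁))
        ≤ R₀ := by
  rintro s ⟨hs₀, hs₁⟩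
  have ht : 0 ≤ 1 - s := sub_nonneg.2 hs₁
  exact div_le_of_le_mul₀ (by positivity) hR₀.le
    (norm_sq_lineMap_le_mul hW₀.le hW₁.le hE₀.le hE₁.le hR₀.le hz₀ hz₁ hs₀ hs₁)
end

section
/- Let W₀, W₁, E₀, E₁ > 0. The function f(s) = (1−s)s / (((1−s)W₀+sW₁)((1−s)E₀+sE₁)) on (0,1) attains its maximum at ŝ = √(W₀E₀)/(√(W₀E₀)+√(W₁E₁)); it is increasing on (0, ŝ) and decreasing on (ŝ, 1). -/
/-!
Write `a = W₀E₀`, `b = W₁E₁` and `D(s)` for the denominator of `f`. Expanding gives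
`f t - f s = (t - s) (a (1 - s)(1 - t) - b s t) / (D(s) D(t))`.
With `p = √a` and `q = √b`, the peak `ŝ = p / (p + q)` is where `q s = p (1 - s)`, so for
`s < t` on one side of `ŝ` the factor `p² (1 - s)(1 - t) - q² s t` has a constant sign.
-/

open Set

noncomputable section

namespace Blend

lemma lt_div_add_iff {p q s : ℝ} (hpq : 0 < p + q) :
    s < p / (p + q) ↔ q * s < p * (1 - s) := by
  rw [lt_div_iff₀ hpq]
  constructor <;> intro h <;> linarith

lemma le_div_add_iff {p q s : ℝ} (hpq : 0 < p + q) :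
    s ≤ p / (p + q) ↔ q * s ≤ p * (1 - s) := by
  rw [le_div_iff₀ hpq]
  constructor <;> intro h <;> linarith

lemma sq_mul_mul_lt_of_le_div_add {p q s t : ℝ} (hp : 0 < p) (hq : 0 < q) (hs : 0 < s)
    (hst : s < t) (ht : t ≤ p / (p + q)) : q ^ 2 * s * t < p ^ 2 * (1 - s) * (1 - t) := by
  have hpq : 0 < p + q := add_pos hp hq
  have hs' : q * s < p * (1 - s) := (lt_div_add_iff hpq).mp (hst.trans_le ht)
  have ht' : q * t ≤ p * (1 - t) := (le_div_add_iff hpq).mp ht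
  calc q ^ 2 * s * t = (q * s) * (q * t) := by ring
    _ < (p * (1 - s)) * (q * t) := by gcongr; exact mul_pos hq (hs.trans hst)
    _ ≤ (p * (1 - s)) * (p * (1 - t)) := by gcongr; linarith [mul_pos hq hs]
    _ = p ^ 2 * (1 - s) * (1 - t) := by ring

lemma sq_mul_mul_lt_of_div_add_le {p q s t : ℝ} (hp : 0 < p) (hq : 0 < q)
    (hs : p / (p + q) ≤ s) (hst : s < t) (ht : t < 1) :
    p ^ 2 * (1 - s) * (1 - t) < q ^ 2 * s * t := by
  have hpq : 0 < p + q := add_pos hp hq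
  have hs' : p * (1 - s) ≤ q * s := not_lt.mp fun h ↦ hs.not_gt ((lt_div_add_iff hpq).mpr h)
  have ht' : p * (1 - t) < q * t :=
    not_le.mp fun h ↦ (hs.trans_lt hst).not_ge ((le_div_add_iff hpq).mpr h)
  calc p ^ 2 * (1 - s) * (1 - t) = (p * (1 - s)) * (p * (1 - t)) := by ring
    _ < (p * (1 - s)) * (q * t) := by gcongr; exact mul_pos hp (by linarith)
    _ ≤ (q * s) * (q * t) := by gcongr; linarith [mul_pos hp (sub_pos.mpr ht)]
    _ = q ^ 2 * s * t := by ring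

def ratio (W₀ W₁ E₀ E₁ s : ℝ) : ℝ :=
  (1 - s) * s / (((1 - s) * W₀ + s * W₁) * ((1 - s) * E₀ + s * E₁))

def peak (W₀ W₁ E₀ E₁ : ℝ) : ℝ :=
  √(W₀ * E₀) / (√(W₀ * E₀) + √(W₁ * E₁))

variable {W₀ W₁ E₀ E₁ : ℝ}
variable (hW₀ : 0 < W₀) (hW₁ : 0 < W₁) (hE₀ : 0 < E₀) (hE₁ : 0 < E₁)
include hW₀ hW₁ hE₀ hE₁

lemma denom_pos {s : ℝ} (hs : s ∈ Ioo (0 : ℝ) 1) :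
    0 < ((1 - s) * W₀ + s * W₁) * ((1 - s) * E₀ + s * E₁) := by
  have : 0 < 1 - s := sub_pos.mpr hs.2
  have := hs.1
  positivity

lemma ratio_sub_ratio {s t : ℝ} (hs : s ∈ Ioo (0 : ℝ) 1) (ht : t ∈ Ioo (0 : ℝ) 1) :
    ratio W₀ W₁ E₀ E₁ t - ratio W₀ W₁ E₀ E₁ s =
      (t - s) * (W₀ * E₀ * (1 - s) * (1 - t) - W₁ * E₁ * s * t) /
        ((((1 - s) * W₀ + s * W₁) * ((1 - s) * E₀ + s * E₁)) *
          (((1 - t) * W₀ + t * W₁) * ((1 - t) * E₀ + t * E₁))) := by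
  rw [ratio, ratio, div_sub_div _ _ (denom_pos hW₀ hW₁ hE₀ hE₁ ht).ne'
    (denom_pos hW₀ hW₁ hE₀ hE₁ hs).ne']
  congr 1 <;> ring

lemma peak_mem_Ioo : peak W₀ W₁ E₀ E₁ ∈ Ioo (0 : ℝ) 1 := by
  have hp : 0 < √(W₀ * E₀) := by positivity
  have hq : 0 < √(W₁ * E₁) := by positivity
  exact ⟨by unfold peak; positivity, (div_lt_one (by positivity)).mpr (by linarith)⟩

theorem strictMonoOn_ratio :
    StrictMonoOn (ratio W₀ W₁ E₀ E₁) (Ioc 0 (peak W₀ W₁ E₀ E₁)) := by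
  intro s hs t ht hst
  have hpeak := peak_mem_Ioo hW₀ hW₁ hE₀ hE₁
  have hs' : s ∈ Ioo (0 : ℝ) 1 := ⟨hs.1, hs.2.trans_lt hpeak.2⟩
  have ht' : t ∈ Ioo (0 : ℝ) 1 := ⟨hs.1.trans hst, ht.2.trans_lt hpeak.2⟩
  have hsign : W₁ * E₁ * s * t < W₀ * E₀ * (1 - s) * (1 - t) := by
    have := sq_mul_mul_lt_of_le_div_add (p := √(W₀ * E₀)) (q := √(W₁ * E₁))
      (by positivity) (by positivity) hs.1 hst ht.2
    rwa [Real.sq_sqrt (by positivity), Real.sq_sqrt (by positivity)] at this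
  rw [← sub_pos, ratio_sub_ratio hW₀ hW₁ hE₀ hE₁ hs' ht']
  have := denom_pos hW₀ hW₁ hE₀ hE₁ hs'
  have := denom_pos hW₀ hW₁ hE₀ hE₁ ht'
  exact div_pos (mul_pos (sub_pos.mpr hst) (sub_pos.mpr hsign)) (by positivity)

theorem strictAntiOn_ratio :
    StrictAntiOn (ratio W₀ W₁ E₀ E₁) (Ico (peak W₀ W₁ E₀ E₁) 1) := by
  intro s hs t ht hst
  have hpeak := peak_mem_Ioo hW₀ hW₁ hE₀ hE₁
  have hs' : s ∈ Ioo (0 : ℝ) 1 := ⟨hpeak.1.trans_le hs.1, hs.2⟩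
  have ht' : t ∈ Ioo (0 : ℝ) 1 := ⟨hs'.1.trans hst, ht.2⟩
  have hsign : W₀ * E₀ * (1 - s) * (1 - t) < W₁ * E₁ * s * t := by
    have := sq_mul_mul_lt_of_div_add_le (p := √(W₀ * E₀)) (q := √(W₁ * E₁))
      (by positivity) (by positivity) hs.1 hst ht.2
    rwa [Real.sq_sqrt (by positivity), Real.sq_sqrt (by positivity)] at this
  rw [← sub_neg, ratio_sub_ratio hW₀ hW₁ hE₀ hE₁ hs' ht']
  have := denom_pos hW₀ hW₁ hE₀ hE₁ hs'
  have := denom_pos hW₀ hW₁ hE₀ hE₁ ht'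
  exact div_neg_of_neg_of_pos (mul_neg_of_pos_of_neg (sub_pos.mpr hst) (sub_neg.mpr hsign))
    (by positivity)

theorem ratio_le_ratio_peak {s : ℝ} (hs : s ∈ Ioo (0 : ℝ) 1) :
    ratio W₀ W₁ E₀ E₁ s ≤ ratio W₀ W₁ E₀ E₁ (peak W₀ W₁ E₀ E₁) := by
  have hpeak := peak_mem_Ioo hW₀ hW₁ hE₀ hE₁
  rcases lt_trichotomy s (peak W₀ W₁ E₀ E₁) with h | rfl | h
  · exact (strictMonoOn_ratio hW₀ hW₁ hE₀ hE₁ ⟨hs.1, h.le⟩ ⟨hpeak.1, le_rfl⟩ h).le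
  · exact le_rfl
  · exact (strictAntiOn_ratio hW₀ hW₁ hE₀ hE₁ ⟨le_rfl, hpeak.2⟩ ⟨h.le, hs.2⟩ h).le

end Blend

end

theorem stmt_12 (W₀ W₁ E₀ E₁ : ℝ)
    (hW₀ : 0 < W₀) (hW₁ : 0 < W₁) (hE₀ : 0 < E₀) (hE₁ : 0 < E₁) :
    let f : ℝ → ℝ := fun s =>
      (1 - s) * s / (((1 - s) * W₀ + s * W₁) * ((1 - s) * E₀ + s * E₁))
    let sh : ℝ := Real.sqrt (W₀ * E₀) / (Real.sqrt (W₀ * E₀) + Real.sqrt (W₁ * E₁))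
    (∀ s ∈ Set.Ioo (0 : ℝ) 1, f s ≤ f sh) ∧
    StrictMonoOn f (Set.Ioc 0 sh) ∧ StrictAntiOn f (Set.Ico sh 1) :=
  ⟨fun _ hs ↦ Blend.ratio_le_ratio_peak hW₀ hW₁ hE₀ hE₁ hs,
    Blend.strictMonoOn_ratio hW₀ hW₁ hE₀ hE₁,
    Blend.strictAntiOn_ratio hW₀ hW₁ hE₀ hE₁⟩
end
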